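/- Let G be a graph with no isolated vertex such that γ_t(G) = (1/2)·max{γ_r(G), 2·ρ(G)}. Then for any noncomplete graph H, γ_r(G∘H) = 2·γ_t(G). -/

import Mathlib

open Finset
open scoped Classical

/-- The lexicographic product of two simple graphs. -/
def lexProd {α β : Type*} (G : SimpleGraph α) (H : SimpleGraph β) :
    SimpleGraph (α × β) where
  Adj p q := G.Adj p.1 q.1 ∨ (p.1 = q.1 ∧ H.Adj p.2 q.2)
  symm := by
    constructor
    rintro ⟨a, b⟩ ⟨c, d⟩ (h | ⟨h1, h2⟩)
    · exact Or.inl h.symm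
    · exact Or.inr ⟨h1.symm, h2.symm⟩
  loopless := by
    constructor
    rintro ⟨a, b⟩ (h | ⟨h1, h2⟩)
    · exact G.irrefl h
    · exact H.irrefl h2

/-- A vertex `w` is undefended with respect to `g` if `g w = 0` and `g x = 0`
for every neighbour `x` of `w`. -/
def Undefended {α : Type*} (G : SimpleGraph α) (g : α → ℕ) (w : α) : Prop :=
  g w = 0 ∧ ∀ x, G.Adj w x → g x = 0

/-- A weak Roman dominating function. -/
def IsWRDF {α : Type*} (G : SimpleGraph α) (f : α → ℕ) : Prop :=
  (∀ v, f v ≤ 2) ∧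
    ∀ v, f v = 0 → ∃ u, G.Adj u v ∧ 1 ≤ f u ∧
      ∀ w, ¬ Undefended G (Function.update (Function.update f v 1) u (f u - 1)) w

/-- The weak Roman domination number. -/
noncomputable def weakRomanNumber {α : Type*} (G : SimpleGraph α) [Fintype α] : ℕ :=
  sInf {k | ∃ f : α → ℕ, IsWRDF G f ∧ ∑ v, f v = k}

/-- A dominating set. -/
def IsDomSet {α : Type*} (G : SimpleGraph α) (D : Finset α) : Prop :=
  ∀ v ∉ D, ∃ u ∈ D, G.Adj u v

/-- The domination number. -/
noncomputable def domNumber {α : Type*} (G : SimpleGraph α) [Fintype α] : ℕ :=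
  sInf {k | ∃ D : Finset α, IsDomSet G D ∧ D.card = k}

/-- A total dominating set. -/
def IsTotalDomSet {α : Type*} (G : SimpleGraph α) (S : Finset α) : Prop :=
  ∀ v, ∃ u ∈ S, G.Adj u v

/-- The total domination number. -/
noncomputable def totalDomNumber {α : Type*} (G : SimpleGraph α) [Fintype α] : ℕ :=
  sInf {k | ∃ S : Finset α, IsTotalDomSet G S ∧ S.card = k}

/-- A double total dominating set: every vertex has at least two neighbours in `S`. -/
def IsDoubleTotalDomSet {α : Type*} (G : SimpleGraph α) (S : Finset α) : Prop :=
  ∀ v, ∃ u₁ ∈ S, ∃ u₂ ∈ S, u₁ ≠ u₂ ∧ G.Adj u₁ v ∧ G.Adj u₂ v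

/-- The double total domination number. -/
noncomputable def doubleTotalDomNumber {α : Type*} (G : SimpleGraph α) [Fintype α] : ℕ :=
  sInf {k | ∃ S : Finset α, IsDoubleTotalDomSet G S ∧ S.card = k}

/-- A 2-packing: the closed neighbourhoods of distinct members are disjoint. -/
def IsTwoPacking {α : Type*} (G : SimpleGraph α) (X : Finset α) : Prop :=
  ∀ u ∈ X, ∀ v ∈ X, u ≠ v →
    ∀ w, ¬ ((w = u ∨ G.Adj u w) ∧ (w = v ∨ G.Adj v w))

/-- The 2-packing number. -/
noncomputable def twoPackingNumber {α : Type*} (G : SimpleGraph α) [Fintype α] : ℕ :=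
  sSup {k | ∃ X : Finset α, IsTwoPacking G X ∧ X.card = k}

/-- A secure dominating set. -/
def IsSecureDomSet {α : Type*} (G : SimpleGraph α) (S : Finset α) : Prop :=
  IsDomSet G S ∧ ∀ v ∉ S, ∃ u ∈ S, G.Adj u v ∧ IsDomSet G (insert v (S.erase u))

/-- The secure domination number. -/
noncomputable def secureDomNumber {α : Type*} (G : SimpleGraph α) [Fintype α] : ℕ :=
  sInf {k | ∃ S : Finset α, IsSecureDomSet G S ∧ S.card = k}

/-- The corona product of two graphs. -/
def corona {α β : Type*} (G₁ : SimpleGraph α) (G₂ : SimpleGraph β) :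
    SimpleGraph (α ⊕ α × β) where
  Adj x y :=
    match x, y with
    | .inl a, .inl a' => G₁.Adj a a'
    | .inl a, .inr p => a = p.1
    | .inr p, .inl a => p.1 = a
    | .inr p, .inr q => p.1 = q.1 ∧ G₂.Adj p.2 q.2
  symm := by
    constructor
    rintro (a | p) (a' | q) h
    · exact G₁.adj_symm h
    · exact h.symm
    · exact h.symm
    · exact ⟨h.1.symm, G₂.adj_symm h.2⟩
  loopless := by
    constructor
    rintro (a | p) h
    · exact G₁.irrefl h
    · exact G₂.irrefl h.2


/-!
Upper bound: for a total dominating set `S` of `G` and `a ≠ b` in `H`, weight `1` on `S × {a, b}`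
is a WRDF of `G ∘ H`. Every vertex `(w, y)` is adjacent to both `(s, a)` and `(s, b)` for some
`s ∈ S` adjacent to `w`, and the only labelled vertex a move from `(u, a)` empties is `(u, a)`, so
`(s, a)` stays labelled if `s ≠ u`, and `(u, b)` if `s = u`.

Lower bounds: summing a WRDF of `G ∘ H` over each copy of `H` and capping at `2` gives a WRDF of
`G`, so `γ_r(G) ≤ γ_r(G ∘ H)`. Two nonadjacent vertices `v, t` whose closed neighbourhoods lie in a
set `T` force weight at least `2` on `T`: with weight `1`, the single guard moving to defend `v`
leaves `t` undefended. For noncomplete `H` this applies to `T = N[x] × V(H)`, and these sets are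
disjoint over a 2-packing, so `2ρ(G) ≤ γ_r(G ∘ H)`.
-/

section Extremal

variable {α : Type*} [Fintype α] (G : SimpleGraph α)

theorem weakRomanNumber_le_sum {f : α → ℕ} (hf : IsWRDF G f) :
    weakRomanNumber G ≤ ∑ v, f v :=
  Nat.sInf_le ⟨f, hf, rfl⟩

theorem exists_isWRDF_sum_eq_weakRomanNumber :
    ∃ f : α → ℕ, IsWRDF G f ∧ ∑ v, f v = weakRomanNumber G :=
  Nat.sInf_mem (s := {k | ∃ f : α → ℕ, IsWRDF G f ∧ ∑ v, f v = k})
    ⟨_, fun _ => 2, ⟨fun _ => le_rfl, fun _ h => absurd h two_ne_zero⟩, rfl⟩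

theorem exists_isTotalDomSet_card_eq_totalDomNumber (hG : ∀ v, ∃ u, G.Adj v u) :
    ∃ S : Finset α, IsTotalDomSet G S ∧ S.card = totalDomNumber G :=
  Nat.sInf_mem (s := {k | ∃ S : Finset α, IsTotalDomSet G S ∧ S.card = k})
    ⟨_, univ, fun v => (hG v).imp fun u hu => ⟨mem_univ u, hu.symm⟩, rfl⟩

theorem exists_isTwoPacking_card_eq_twoPackingNumber :
    ∃ X : Finset α, IsTwoPacking G X ∧ X.card = twoPackingNumber G :=
  Nat.sSup_mem (s := {k | ∃ X : Finset α, IsTwoPacking G X ∧ X.card = k})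
    ⟨0, ∅, by simp [IsTwoPacking], rfl⟩
    ⟨Fintype.card α, by rintro _ ⟨X, -, rfl⟩; exact X.card_le_univ⟩

end Extremal

section Move

variable {γ : Type*} {f : γ → ℕ} {u v q : γ}

theorem update_update_sub_one_ne_zero (hqu : q ≠ u) (hq : f q ≠ 0) :
    Function.update (Function.update f v 1) u (f u - 1) q ≠ 0 := by
  by_cases hqv : q = v
  · subst hqv
    simp [hqu]
  · simp [hqu, hqv, hq]

theorem update_update_sub_one_eq_zero (hqv : q ≠ v) (hq : f q = 0 ∨ q = u ∧ f u ≤ 1) :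
    Function.update (Function.update f v 1) u (f u - 1) q = 0 := by
  by_cases hqu : q = u
  · subst hqu
    simp only [Function.update_self]
    omega
  · simpa [Function.update_apply, hqu, hqv] using hq

end Move

theorem eq_zero_of_sum_le_one {ι : Type*} {s : Finset ι} {f : ι → ℕ} (hs : ∑ i ∈ s, f i ≤ 1)
    {u i : ι} (hu : u ∈ s) (hfu : 1 ≤ f u) (hi : i ∈ s) (hiu : i ≠ u) : f i = 0 := by
  have := add_le_sum (f := f) (fun _ _ => Nat.zero_le _) hu hi hiu.symm
  omega

theorem Undefended.of_map {γ α : Type*} {K : SimpleGraph γ} {G : SimpleGraph α} (π : γ → α)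
    (hπ : ∀ p q, K.Adj p q → π p = π q ∨ G.Adj (π p) (π q)) {f : γ → ℕ} {g : α → ℕ}
    (hfg : ∀ p, g (π p) = 0 → f p = 0) {p : γ} (hp : Undefended G g (π p)) :
    Undefended K f p := by
  refine ⟨hfg p hp.1, fun q hq => hfg q ?_⟩
  rcases hπ p q hq with h | h
  · exact h ▸ hp.1
  · exact hp.2 _ h

section TwoNonadjacent

variable {γ : Type*} {K : SimpleGraph γ} {f : γ → ℕ} {T : Finset γ} {v t : γ}

theorem IsWRDF.two_le_sum_of_eq_zero (hf : IsWRDF K f) (hne : v ≠ t) (hvt : ¬K.Adj v t)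
    (hfv : f v = 0) (hv : ∀ w, K.Adj v w → w ∈ T) (ht : ∀ w, w = t ∨ K.Adj t w → w ∈ T) :
    2 ≤ ∑ w ∈ T, f w := by
  by_contra! hT
  obtain ⟨u, huv, hfu, hsafe⟩ := hf.2 v hfv
  have huT : u ∈ T := hv u huv.symm
  have hfu_le : f u ≤ 1 := (single_le_sum (fun _ _ => Nat.zero_le _) huT).trans (by omega)
  have hzero : ∀ w, w = t ∨ K.Adj t w → w ≠ v →
      Function.update (Function.update f v 1) u (f u - 1) w = 0 := by
    intro w hw hwv
    by_cases hwu : w = u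
    · exact update_update_sub_one_eq_zero hwv (Or.inr ⟨hwu, hfu_le⟩)
    · exact update_update_sub_one_eq_zero hwv
        (Or.inl (eq_zero_of_sum_le_one (by omega) huT hfu (ht w hw) hwu))
  refine hsafe t ⟨hzero t (Or.inl rfl) hne.symm, fun w hw => hzero w (Or.inr hw) ?_⟩
  rintro rfl
  exact hvt hw.symm

theorem IsWRDF.two_le_sum (hf : IsWRDF K f) (hne : v ≠ t) (hvt : ¬K.Adj v t)
    (hv : ∀ w, w = v ∨ K.Adj v w → w ∈ T) (ht : ∀ w, w = t ∨ K.Adj t w → w ∈ T) :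
    2 ≤ ∑ w ∈ T, f w := by
  by_cases hfv : f v = 0
  · exact hf.two_le_sum_of_eq_zero hne hvt hfv (fun w hw => hv w (Or.inr hw)) ht
  by_cases hft : f t = 0
  · exact hf.two_le_sum_of_eq_zero hne.symm (fun h => hvt h.symm) hft
      (fun w hw => ht w (Or.inr hw)) hv
  calc 2 ≤ f v + f t := by omega
    _ ≤ ∑ w ∈ T, f w :=
      add_le_sum (fun _ _ => Nat.zero_le _) (hv v (Or.inl rfl)) (ht t (Or.inl rfl)) hne

end TwoNonadjacent

section LexProd

variable {α β : Type*} {G : SimpleGraph α} {H : SimpleGraph β}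

theorem isWRDF_lexProd_of_isTotalDomSet {S : Finset α} (hS : IsTotalDomSet G S) {a b : β}
    (hab : a ≠ b) : IsWRDF (lexProd G H) (fun p => if p ∈ S ×ˢ {a, b} then 1 else 0) := by
  refine ⟨fun p => by beta_reduce; split_ifs <;> omega, fun v _ => ?_⟩
  obtain ⟨u, hu, huv⟩ := hS v.1
  refine ⟨(u, a), Or.inl huv, by simp [hu], fun w hw => ?_⟩
  obtain ⟨s, hs, hsw⟩ := hS w.1
  let q : α × β := (s, if s = u then b else a)
  have hqu : q ≠ (u, a) := by
    by_cases hsu : s = u <;> simp [q, hsu, hab.symm]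
  have hq : q ∈ S ×ˢ {a, b} := by
    by_cases hsu : s = u
    · simp [q, hsu, hu]
    · simp [q, hsu, hs]
  exact update_update_sub_one_ne_zero hqu (by simp [hq]) (hw.2 q (Or.inl hsw.symm))

theorem weakRomanNumber_lexProd_le_two_mul_card [Fintype α] [Fintype β] {S : Finset α}
    (hS : IsTotalDomSet G S) {a b : β} (hab : a ≠ b) :
    weakRomanNumber (lexProd G H) ≤ 2 * S.card :=
  calc weakRomanNumber (lexProd G H)
      ≤ ∑ p, if p ∈ S ×ˢ {a, b} then 1 else 0 :=
        weakRomanNumber_le_sum _ (isWRDF_lexProd_of_isTotalDomSet hS hab)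
    _ = 2 * S.card := by
        rw [sum_boole, filter_mem_eq_inter, univ_inter, card_product, card_pair hab, Nat.cast_id,
          mul_comm]

theorem IsWRDF.min_two_sum_column [Fintype β] [Nonempty β] {f : α × β → ℕ}
    (hf : IsWRDF (lexProd G H) f) : IsWRDF G (fun x => min 2 (∑ y, f (x, y))) := by
  set g : α → ℕ := fun x => min 2 (∑ y, f (x, y)) with hg
  have le_column : ∀ x y, f (x, y) ≤ ∑ y', f (x, y') := fun x y =>
    single_le_sum (f := fun y' => f (x, y')) (fun _ _ => Nat.zero_le _) (mem_univ y)
  have zero_of_column : ∀ x y, g x = 0 → f (x, y) = 0 := fun x y hx => by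
    have := le_column x y
    simp only [hg] at hx
    omega
  refine ⟨fun x => min_le_left _ _, fun v hv => ?_⟩
  obtain ⟨y₀⟩ := ‹Nonempty β›
  obtain ⟨⟨u, y⟩, hadj, hfu, hsafe⟩ := hf.2 (v, y₀) (zero_of_column v y₀ hv)
  have huv : G.Adj u v := hadj.resolve_right fun h => by
    have := zero_of_column v y hv
    simp only at h
    rw [h.1] at hfu
    omega
  have hgu : 1 ≤ g u := le_min one_le_two (hfu.trans (le_column u y))
  refine ⟨u, huv, hgu, fun w hw =>
    hsafe (w, y₀) (hw.of_map Prod.fst (fun _ _ h => (Or.symm h).imp And.left id) ?_)⟩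
  rintro ⟨z, y'⟩ hz
  have hzv : z ≠ v := by
    rintro rfl
    simp [G.ne_of_adj huv |>.symm] at hz
  refine update_update_sub_one_eq_zero (by simp [hzv]) ?_
  by_cases hzu : z = u
  · subst hzu
    have hcol : ∑ y', f (z, y') ≤ 1 := by
      simp only [Function.update_self, hg] at hz
      omega
    by_cases hy : y' = y
    · exact Or.inr ⟨by rw [hy], (le_column z y).trans hcol⟩
    · exact Or.inl (eq_zero_of_sum_le_one (f := fun y' => f (z, y')) hcol (mem_univ y) hfu
        (mem_univ y') hy)
  · left
    exact zero_of_column z y' (by simpa [hzu, hzv] using hz)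

theorem weakRomanNumber_le_weakRomanNumber_lexProd [Fintype α] [Fintype β] [Nonempty β] :
    weakRomanNumber G ≤ weakRomanNumber (lexProd G H) := by
  obtain ⟨f, hf, hsum⟩ := exists_isWRDF_sum_eq_weakRomanNumber (lexProd G H)
  calc weakRomanNumber G ≤ ∑ x, min 2 (∑ y, f (x, y)) :=
        weakRomanNumber_le_sum G hf.min_two_sum_column
    _ ≤ ∑ x, ∑ y, f (x, y) := sum_le_sum fun _ _ => min_le_right _ _
    _ = weakRomanNumber (lexProd G H) := by rw [← Fintype.sum_prod_type, hsum]

theorem IsWRDF.two_le_sum_lexProd_closedNbhd [Fintype α] [Fintype β] {f : α × β → ℕ}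
    (hf : IsWRDF (lexProd G H) f) (hH : ∃ a b : β, a ≠ b ∧ ¬H.Adj a b) (x : α) :
    2 ≤ ∑ p ∈ univ.filter (fun p : α × β => p.1 = x ∨ G.Adj x p.1), f p := by
  obtain ⟨a, b, hab, hnadj⟩ := hH
  have closedNbhd_mem : ∀ y w, w = (x, y) ∨ (lexProd G H).Adj (x, y) w →
      w ∈ univ.filter (fun p : α × β => p.1 = x ∨ G.Adj x p.1) := by
    rintro y w (rfl | h | ⟨h, -⟩) <;> simp_all
  refine hf.two_le_sum (by simp [hab]) ?_ (closedNbhd_mem a) (closedNbhd_mem b)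
  rintro (h | ⟨-, h⟩)
  · exact G.irrefl h
  · exact hnadj h

theorem two_mul_twoPackingNumber_le_weakRomanNumber_lexProd [Fintype α] [Fintype β]
    (hH : ∃ a b : β, a ≠ b ∧ ¬H.Adj a b) :
    2 * twoPackingNumber G ≤ weakRomanNumber (lexProd G H) := by
  obtain ⟨X, hX, hcard⟩ := exists_isTwoPacking_card_eq_twoPackingNumber G
  obtain ⟨f, hf, hsum⟩ := exists_isWRDF_sum_eq_weakRomanNumber (lexProd G H)
  set T : α → Finset (α × β) := fun x => univ.filter (fun p => p.1 = x ∨ G.Adj x p.1)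
  have hdisj : (X : Set α).PairwiseDisjoint T := fun x hx x' hx' hne =>
    disjoint_left.2 fun p hp hp' =>
      hX x hx x' hx' hne p.1 ⟨(mem_filter.1 hp).2, (mem_filter.1 hp').2⟩
  calc 2 * twoPackingNumber G = ∑ _x ∈ X, 2 := by rw [sum_const, hcard, smul_eq_mul, mul_comm]
    _ ≤ ∑ x ∈ X, ∑ p ∈ T x, f p :=
        sum_le_sum fun x _ => hf.two_le_sum_lexProd_closedNbhd hH x
    _ = ∑ p ∈ X.biUnion T, f p := (sum_biUnion hdisj).symm
    _ ≤ ∑ p, f p := sum_le_sum_of_subset (subset_univ _)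
    _ = weakRomanNumber (lexProd G H) := hsum

end LexProd

/-- If `G` has no isolated vertex and
`γ_t(G) = (1/2)·max{γ_r(G), 2ρ(G)}`, then for any noncomplete graph `H`,
`γ_r(G∘H) = 2·γ_t(G)`. -/
theorem weakRoman_lexProd_eq_two_mul_totalDom {α β : Type*} [Fintype α] [Fintype β]
    (G : SimpleGraph α) (H : SimpleGraph β)
    (hG : ∀ v : α, ∃ u, G.Adj v u)
    (hyp : 2 * totalDomNumber G = max (weakRomanNumber G) (2 * twoPackingNumber G))
    (hH : ∃ a b : β, a ≠ b ∧ ¬ H.Adj a b) :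
    weakRomanNumber (lexProd G H) = 2 * totalDomNumber G := by
  have ⟨a, b, hab, _⟩ := hH
  have : Nonempty β := ⟨a⟩
  obtain ⟨S, hS, hcard⟩ := exists_isTotalDomSet_card_eq_totalDomNumber G hG
  refine le_antisymm ?_ ?_
  · exact hcard ▸ weakRomanNumber_lexProd_le_two_mul_card hS hab
  · rw [hyp]
    exact max_le weakRomanNumber_le_weakRomanNumber_lexProd
      (two_mul_twoPackingNumber_le_weakRomanNumber_lexProd hH)
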